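/- For all polynomials a, b in ℤ[x] and every natural number n, the numerator closure polynomial of the n-th ⊕-power of (a,b) equals (a + x·b)ⁿ + (x² − 1)·aⁿ. -/

import Mathlib

/-!
Both `p ↦ p.1` and `p ↦ p.1 + x·p.2` turn `⊕` into multiplication, so on the `n`-th power they
give `aⁿ` and `(a + x·b)ⁿ`; and `N(a, b) = (a + x·b) + (x² - 1)·a`.
-/

open Polynomial

/-- Sum of bracket pairs: (a₁,b₁) ⊕ (a₂,b₂) = (a₁a₂, a₁b₂ + b₁a₂ + x·b₁b₂). -/
noncomputable def bpSum (p q : ℤ[X] × ℤ[X]) : ℤ[X] × ℤ[X] :=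
  (p.1 * q.1, p.1 * q.2 + p.2 * q.1 + X * (p.2 * q.2))

/-- n-th ⊕-power of a bracket pair. -/
noncomputable def bpPow (p : ℤ[X] × ℤ[X]) : ℕ → ℤ[X] × ℤ[X]
  | 0 => (1, 0)
  | n + 1 => bpSum p (bpPow p n)

/-- Denominator closure polynomial D(a,b) = x·a + x²·b. -/
noncomputable def bpD (p : ℤ[X] × ℤ[X]) : ℤ[X] := X * p.1 + X ^ 2 * p.2

/-- Numerator closure polynomial N(a,b) = x²·a + x·b. -/
noncomputable def bpN (p : ℤ[X] × ℤ[X]) : ℤ[X] := X ^ 2 * p.1 + X * p.2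

/-- R-closure polynomial R(a,b) = N(a,b) + D(a,b). -/
noncomputable def bpR (p : ℤ[X] × ℤ[X]) : ℤ[X] := bpN p + bpD p

lemma bpSum_fst (p q : ℤ[X] × ℤ[X]) : (bpSum p q).1 = p.1 * q.1 := rfl

lemma bpSum_fst_add_X_mul_snd (p q : ℤ[X] × ℤ[X]) :
    (bpSum p q).1 + X * (bpSum p q).2 = (p.1 + X * p.2) * (q.1 + X * q.2) := by
  simp only [bpSum]
  ring

lemma bpPow_fst (p : ℤ[X] × ℤ[X]) (n : ℕ) : (bpPow p n).1 = p.1 ^ n := by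
  induction n with
  | zero => rfl
  | succ n ih => rw [bpPow, bpSum_fst, ih, pow_succ']

lemma bpPow_fst_add_X_mul_snd (p : ℤ[X] × ℤ[X]) (n : ℕ) :
    (bpPow p n).1 + X * (bpPow p n).2 = (p.1 + X * p.2) ^ n := by
  induction n with
  | zero => simp [bpPow]
  | succ n ih => rw [bpPow, bpSum_fst_add_X_mul_snd, ih, pow_succ']

lemma bpN_eq (p : ℤ[X] × ℤ[X]) : bpN p = p.1 + X * p.2 + (X ^ 2 - 1) * p.1 := by
  rw [bpN]
  ring

theorem bpN_pow (a b : ℤ[X]) (n : ℕ) :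
    bpN (bpPow (a, b) n) = (a + X * b) ^ n + (X ^ 2 - 1) * a ^ n := by
  rw [bpN_eq, bpPow_fst_add_X_mul_snd, bpPow_fst]
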